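/- Let (Q,R) be a quadratic monomial presentation, let C be a complete circuit with length l and period r, and let C̄ be a cycle in C. (1) If (−1)^{(l+1)r} = 1 in k, then H_m(k(B⊙Γ)_C) = 0 for all m ∉ {l, l−1}, and H_l(k(B⊙Γ)_C) and H_{l−1}(k(B⊙Γ)_C) are both one-dimensional, spanned respectively by the l-cycle ĥ(C̄) = Σ_{i=0}^{r−1} (−1)^{(l+1)i} (s(rot^i(C̄)), rot^i(C̄)) and by the (l−1)-cycle (l1(C̄), l2(C̄)); moreover ĥ(rot(C̄)) = (−1)^{l+1}·ĥ(C̄), and (l1(rot(C̄)), l2(rot(C̄))) is homologous to (−1)^{l+1}·(l1(C̄), l2(C̄)). (2) If (−1)^{(l+1)r} ≠ 1 in k, then H_m(k(B⊙Γ)_C) = 0 for all m. -/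

import Mathlib

/-!
Common framework: quivers, paths (as a start vertex together with a list of
composable arrows, listed in order of traversal, so that the paper's path
`c_m ⋯ c_1` corresponds to the list `[c_1, …, c_m]`), gentle and quadratic
monomial presentations, the cochain complex `k(Γ ∥ B)` and the chain complex
`k(B ⊙ Γ)` of the paper.
-/

namespace GentleTT

structure Quiv where
  V : Type
  A : Type
  [fintV : Fintype V]
  [fintA : Fintype A]
  [decV : DecidableEq V]
  [decA : DecidableEq A]
  src : A → V
  tgt : A → V

attribute [instance] Quiv.fintV Quiv.fintA Quiv.decV Quiv.decA

/-- A "path datum": a start vertex together with the list of arrows traversed. -/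
abbrev PathDat (Q : Quiv) := Q.V × List Q.A

def psrc (Q : Quiv) (p : PathDat Q) : Q.V := p.1

def ptgt (Q : Quiv) (p : PathDat Q) : Q.V := p.2.getLast?.elim p.1 Q.tgt

def plen (Q : Quiv) (p : PathDat Q) : ℕ := p.2.length

/-- `p` is a genuine path: consecutive arrows compose, and the recorded start
vertex is the source of the first arrow (if any). -/
def Ok (Q : Quiv) (p : PathDat Q) : Prop :=
  p.2.Chain' (fun a b => Q.tgt a = Q.src b) ∧ ∀ a ∈ p.2.head?, Q.src a = p.1

/-- `p` is a path none of whose length-2 subpaths lies in `R`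
(an element of the basis `B` of `kQ/⟨R⟩`). -/
def InB (Q : Quiv) (R : Set (Q.A × Q.A)) (p : PathDat Q) : Prop :=
  Ok Q p ∧ p.2.Chain' (fun a b => (a, b) ∉ R)

/-- `p` is a path all of whose length-2 subpaths lie in `R` (an element of `Γ`). -/
def InG (Q : Quiv) (R : Set (Q.A × Q.A)) (p : PathDat Q) : Prop :=
  Ok Q p ∧ p.2.Chain' (fun a b => (a, b) ∈ R)

/-- Parallel paths: same source and same target. -/
def Par (Q : Quiv) (p q : PathDat Q) : Prop :=
  psrc Q p = psrc Q q ∧ ptgt Q p = ptgt Q q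

/-- Antiparallel paths: `s(p) = t(q)` and `t(p) = s(q)`. -/
def AntiPar (Q : Quiv) (p q : PathDat Q) : Prop :=
  psrc Q p = ptgt Q q ∧ ptgt Q p = psrc Q q

/-- A cycle: a path of positive length whose source equals its target. -/
def IsCycle (Q : Quiv) (p : PathDat Q) : Prop :=
  Ok Q p ∧ p.2 ≠ [] ∧ psrc Q p = ptgt Q p

/-- Rotation of a cycle: the paper's `rot (c_m ⋯ c_1) = c_{m-1} ⋯ c_1 c_m`
(the last arrow traversed becomes the first one traversed). -/
def rotP (Q : Quiv) (p : PathDat Q) : PathDat Q :=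
  match p.2.getLast? with
  | none => p
  | some a => (Q.src a, a :: p.2.dropLast)

/-- Iterated rotation `rot^i`. -/
def rotI (Q : Quiv) (i : ℕ) (p : PathDat Q) : PathDat Q := (rotP Q)^[i] p

def powL {α : Type} (l : List α) : ℕ → List α
  | 0 => []
  | n + 1 => l ++ powL l n

/-- The `n`-th power `p^n` of a (cyclic) path. -/
def powP (Q : Quiv) (p : PathDat Q) (n : ℕ) : PathDat Q := (p.1, powL p.2 n)

/-- A primitive cycle: a cycle that is not a proper power of another cycle. -/
def IsPrimitive (Q : Quiv) (p : PathDat Q) : Prop :=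
  IsCycle Q p ∧ ∀ (q : PathDat Q) (n : ℕ), IsCycle Q q → 2 ≤ n → p ≠ powP Q q n

/-- The period of a cycle: the least `i ≥ 1` with `rot^i p = p`. -/
noncomputable def periodP (Q : Quiv) (p : PathDat Q) : ℕ :=
  sInf {i : ℕ | 1 ≤ i ∧ rotI Q i p = p}

/-- Two cycles are conjugate (belong to the same circuit) if one is obtained
from the other by iterated rotation. -/
def RotEquiv (Q : Quiv) (p q : PathDat Q) : Prop := ∃ i : ℕ, rotI Q i p = q

/-- A cocomplete cycle: `p² ∈ B`. -/
def Cocomplete (Q : Quiv) (R : Set (Q.A × Q.A)) (p : PathDat Q) : Prop :=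
  IsCycle Q p ∧ InB Q R (powP Q p 2)

/-- A complete cycle: `p² ∈ Γ`. -/
def Complete (Q : Quiv) (R : Set (Q.A × Q.A)) (p : PathDat Q) : Prop :=
  IsCycle Q p ∧ InG Q R (powP Q p 2)

/-- `B`-maximal path: in `B` and not a proper subpath of another element of `B`. -/
def BMax (Q : Quiv) (R : Set (Q.A × Q.A)) (p : PathDat Q) : Prop :=
  InB Q R p ∧ ∀ q : PathDat Q, InB Q R q → p.2 <:+: q.2 → p.2 = q.2

/-- `Γ`-maximal path: in `Γ` and not a proper subpath of another element of `Γ`. -/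
def GMax (Q : Quiv) (R : Set (Q.A × Q.A)) (p : PathDat Q) : Prop :=
  InG Q R p ∧ ∀ q : PathDat Q, InG Q R q → p.2 <:+: q.2 → p.2 = q.2

def Adj (Q : Quiv) (v w : Q.V) : Prop :=
  ∃ a : Q.A, (Q.src a = v ∧ Q.tgt a = w) ∨ (Q.src a = w ∧ Q.tgt a = v)

/-- Connectedness of the underlying graph of the quiver. -/
def Connected (Q : Quiv) : Prop := ∀ v w : Q.V, Relation.ReflTransGen (Adj Q) v w

/-- A quadratic monomial presentation: the relations are paths of length 2. -/
def IsQuadMon (Q : Quiv) (R : Set (Q.A × Q.A)) : Prop :=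
  ∀ r ∈ R, Q.tgt r.1 = Q.src r.2

/-- A gentle presentation. -/
structure IsGentle (Q : Quiv) (R : Set (Q.A × Q.A)) : Prop where
  nonempty : Nonempty Q.V
  connected : Connected Q
  relComposable : ∀ r ∈ R, Q.tgt r.1 = Q.src r.2
  srcLe : ∀ v : Q.V, {a : Q.A | Q.src a = v}.ncard ≤ 2
  tgtLe : ∀ v : Q.V, {a : Q.A | Q.tgt a = v}.ncard ≤ 2
  uniqNotRelAfter : ∀ a : Q.A, {b : Q.A | Q.tgt a = Q.src b ∧ (a, b) ∉ R}.Subsingleton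
  uniqNotRelBefore : ∀ a : Q.A, {c : Q.A | Q.tgt c = Q.src a ∧ (c, a) ∉ R}.Subsingleton
  uniqRelAfter : ∀ a : Q.A, {b : Q.A | Q.tgt a = Q.src b ∧ (a, b) ∈ R}.Subsingleton
  uniqRelBefore : ∀ a : Q.A, {c : Q.A | Q.tgt c = Q.src a ∧ (c, a) ∈ R}.Subsingleton

/-- A spanning tree of the (finite, connected) quiver `Q`: a set of arrows
which connects all vertices and has exactly `|Q₀| - 1` elements. -/
def IsSpanningTree (Q : Quiv) (T : Set Q.A) : Prop :=
  (∀ v w : Q.V, Relation.ReflTransGen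
      (fun x y => ∃ a ∈ T, (Q.src a = x ∧ Q.tgt a = y) ∨ (Q.src a = y ∧ Q.tgt a = x)) v w) ∧
  T.ncard + 1 = Fintype.card Q.V

/-- A set of representatives, one for each rotation class of cycles
satisfying `Pred`. -/
def IsRepSet (Q : Quiv) (P : Set (PathDat Q)) (Pred : PathDat Q → Prop) : Prop :=
  (∀ p ∈ P, Pred p) ∧ ∀ q : PathDat Q, Pred q → ∃! p, p ∈ P ∧ RotEquiv Q q p

/-- `S` is a valid choice of the paper's set `Crep` for the predicate `Pred`
(e.g. cocompleteness, or completeness): it consists of all positive powers of a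
chosen set of representatives of the rotation classes of primitive cycles
satisfying `Pred`. -/
def IsCrep (Q : Quiv) (S : Set (PathDat Q)) (Pred : PathDat Q → Prop) : Prop :=
  ∃ P : Set (PathDat Q),
    IsRepSet Q P (fun p => IsPrimitive Q p ∧ Pred p) ∧
    S = {x | ∃ p ∈ P, ∃ n : ℕ, 1 ≤ n ∧ x = powP Q p n}

/-! ### The cochain complex `k(Γ ∥ B)` -/

/-- Membership in the degree-`m` basis `Γ_m ∥ B` of the cochain complex. -/
def GBmem (Q : Quiv) (R : Set (Q.A × Q.A)) (m : ℕ) (x : PathDat Q × PathDat Q) : Prop :=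
  InG Q R x.1 ∧ plen Q x.1 = m ∧ InB Q R x.2 ∧ Par Q x.1 x.2

abbrev GB (Q : Quiv) (R : Set (Q.A × Q.A)) (m : ℕ) :=
  {x : PathDat Q × PathDat Q // GBmem Q R m x}

/-- The degree-`m` component of the cochain complex `k(Γ ∥ B)`. -/
abbrev Coch (k : Type) [Field k] (Q : Quiv) (R : Set (Q.A × Q.A)) (m : ℕ) :=
  GB Q R m →₀ k

/-- The basis vector of `k(Γ_m ∥ B)` attached to a raw pair of path data
(and `0` if the pair is not in `Γ_m ∥ B`). -/
noncomputable def bv (k : Type) [Field k] (Q : Quiv) (R : Set (Q.A × Q.A)) (m : ℕ)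
    (x : PathDat Q × PathDat Q) : Coch k Q R m := by
  classical
  exact if h : GBmem Q R m x then Finsupp.single (⟨x, h⟩ : GB Q R m) (1 : k) else 0

/-- Extension on the left (in the paper's notation): `p ↦ b p`. -/
def extL (Q : Quiv) (b : Q.A) (p : PathDat Q) : PathDat Q := (p.1, p.2 ++ [b])

/-- Extension on the right (in the paper's notation): `p ↦ p a`. -/
def extR (Q : Quiv) (a : Q.A) (p : PathDat Q) : PathDat Q := (Q.src a, a :: p.2)

/-- The differential on a basis element:
`d^m (γ, α) = Σ_b (bγ, bα) - (-1)^m Σ_a (γa, αa)`. -/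
noncomputable def dB (k : Type) [Field k] (Q : Quiv) (R : Set (Q.A × Q.A)) (m : ℕ)
    (x : GB Q R m) : Coch k Q R (m + 1) := by
  classical
  exact
    (∑ b : Q.A,
      if h : GBmem Q R (m + 1) (extL Q b x.val.1, extL Q b x.val.2) then
        Finsupp.single (⟨_, h⟩ : GB Q R (m + 1)) (1 : k) else 0)
    - ((-1 : k) ^ m) •
      (∑ a : Q.A,
        if h : Q.tgt a = psrc Q x.val.1 ∧
            GBmem Q R (m + 1) (extR Q a x.val.1, extR Q a x.val.2) then
          Finsupp.single (⟨_, h.2⟩ : GB Q R (m + 1)) (1 : k) else 0)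

/-- The differential `d^m : k(Γ_m ∥ B) → k(Γ_{m+1} ∥ B)`. -/
noncomputable def dLin (k : Type) [Field k] (Q : Quiv) (R : Set (Q.A × Q.A)) (m : ℕ) :
    Coch k Q R m →ₗ[k] Coch k Q R (m + 1) :=
  Finsupp.linearCombination k (dB k Q R m)

/-- The element `𝟙 = Σ_{i ∈ Q₀} (e_i, e_i)` (placed in degree `m`; it is the
intended element when `m = 0`). -/
noncomputable def oneD (k : Type) [Field k] (Q : Quiv) (R : Set (Q.A × Q.A)) (m : ℕ) :
    Coch k Q R m :=
  ∑ i : Q.V, bv k Q R m ((i, []), (i, []))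

/-- `⟨α⟩ = Σ_{i=0}^{r-1} (s(rot^i α), rot^i α)`, `r` the period of `α`. -/
noncomputable def cycB (k : Type) [Field k] (Q : Quiv) (R : Set (Q.A × Q.A)) (m : ℕ)
    (α : PathDat Q) : Coch k Q R m :=
  ∑ i ∈ Finset.range (periodP Q α),
    bv k Q R m ((psrc Q (rotI Q i α), []), rotI Q i α)

/-- `⟨C⟩ = Σ_{i=0}^{r-1} (-1)^{i m} (rot^i C, s(rot^i C))`, `r` the period of `C`. -/
noncomputable def cycG (k : Type) [Field k] (Q : Quiv) (R : Set (Q.A × Q.A)) (m : ℕ)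
    (C : PathDat Q) : Coch k Q R m :=
  ∑ i ∈ Finset.range (periodP Q C),
    ((-1 : k) ^ (i * m)) • bv k Q R m (rotI Q i C, (psrc Q (rotI Q i C), []))

/-- The coboundary subspace in degree `m` (zero in degree `0`). -/
noncomputable def cobSp (k : Type) [Field k] (Q : Quiv) (R : Set (Q.A × Q.A)) :
    (m : ℕ) → Submodule k (Coch k Q R m)
  | 0 => ⊥
  | m + 1 => LinearMap.range (dLin k Q R m)

/-- The cocycle subspace in degree `m`. -/
noncomputable def cocSp (k : Type) [Field k] (Q : Quiv) (R : Set (Q.A × Q.A)) (m : ℕ) :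
    Submodule k (Coch k Q R m) :=
  LinearMap.ker (dLin k Q R m)

/-- The degree-`m` cohomology `HH^m` of the complex `k(Γ ∥ B)` vanishes:
every cocycle is a coboundary. -/
def CohomIsZero (k : Type) [Field k] (Q : Quiv) (R : Set (Q.A × Q.A)) (m : ℕ) : Prop :=
  cocSp k Q R m ≤ cobSp k Q R m

/-- The degree-`m` cohomology `HH^m` of the complex `k(Γ ∥ B)` is
finite-dimensional: there is a finite set of cocycles whose classes span it. -/
def CohomFinDim (k : Type) [Field k] (Q : Quiv) (R : Set (Q.A × Q.A)) (m : ℕ) : Prop :=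
  ∃ G : Finset (Coch k Q R m), ↑G ⊆ (cocSp k Q R m : Set (Coch k Q R m)) ∧
    cocSp k Q R m ≤ cobSp k Q R m ⊔ Submodule.span k ↑G

/-- The degree-`m` cohomology `HH^m` of the complex `k(Γ ∥ B)` has dimension at
most `n`: there are `n` cocycles whose classes span it. -/
def CohomDimLe (k : Type) [Field k] (Q : Quiv) (R : Set (Q.A × Q.A)) (m n : ℕ) : Prop :=
  ∃ G : Finset (Coch k Q R m), G.card ≤ n ∧
    ↑G ⊆ (cocSp k Q R m : Set (Coch k Q R m)) ∧
    cocSp k Q R m ≤ cobSp k Q R m ⊔ Submodule.span k ↑G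

/-- `Gen` is a basis of the kernel of `d⁰`, i.e. it freely generates `HH⁰`. -/
def FreelyGeneratesKer0 (k : Type) [Field k] (Q : Quiv) (R : Set (Q.A × Q.A))
    (Gen : Set (Coch k Q R 0)) : Prop :=
  (∀ x ∈ Gen, dLin k Q R 0 x = 0) ∧
  (∀ z : Coch k Q R 0, dLin k Q R 0 z = 0 → z ∈ Submodule.span k Gen) ∧
  LinearIndependent k (fun x : Gen => (x : Coch k Q R 0))

/-- The cohomology classes of the elements of `Gen` freely generate the
degree-`(m+1)` cohomology of `k(Γ ∥ B)`: all elements of `Gen` are cocycles,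
every cocycle is congruent to an element of their span modulo coboundaries, no
nonzero element of their span is a coboundary, and `Gen` is linearly
independent. -/
def FreelyGeneratesCohom (k : Type) [Field k] (Q : Quiv) (R : Set (Q.A × Q.A)) (m : ℕ)
    (Gen : Set (Coch k Q R (m + 1))) : Prop :=
  (∀ x ∈ Gen, dLin k Q R (m + 1) x = 0) ∧
  (∀ z : Coch k Q R (m + 1), dLin k Q R (m + 1) z = 0 →
      ∃ y : Coch k Q R m, z - dLin k Q R m y ∈ Submodule.span k Gen) ∧
  (∀ x ∈ Submodule.span k Gen, x ∈ LinearMap.range (dLin k Q R m) → x = 0) ∧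
  LinearIndependent k (fun x : Gen => (x : Coch k Q R (m + 1)))

/-! ### The chain complex `k(B ⊙ Γ)` -/

/-- Membership in the degree-`m` basis `B ⊙ Γ_m` of the chain complex. -/
def BGmem (Q : Quiv) (R : Set (Q.A × Q.A)) (m : ℕ) (x : PathDat Q × PathDat Q) : Prop :=
  InB Q R x.1 ∧ InG Q R x.2 ∧ plen Q x.2 = m ∧ AntiPar Q x.1 x.2

abbrev BGt (Q : Quiv) (R : Set (Q.A × Q.A)) (m : ℕ) :=
  {x : PathDat Q × PathDat Q // BGmem Q R m x}

/-- The degree-`m` component of the chain complex `k(B ⊙ Γ)`. -/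
abbrev Chn (k : Type) [Field k] (Q : Quiv) (R : Set (Q.A × Q.A)) (m : ℕ) :=
  BGt Q R m →₀ k

/-- The basis vector of `k(B ⊙ Γ_m)` attached to a raw pair of path data
(and `0` if the pair is not in `B ⊙ Γ_m`). -/
noncomputable def bw (k : Type) [Field k] (Q : Quiv) (R : Set (Q.A × Q.A)) (m : ℕ)
    (x : PathDat Q × PathDat Q) : Chn k Q R m := by
  classical
  exact if h : BGmem Q R m x then Finsupp.single (⟨x, h⟩ : BGt Q R m) (1 : k) else 0

/-- `l1(p)`: the last arrow of `p` (as a path of length one). -/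
def l1P (Q : Quiv) (p : PathDat Q) : PathDat Q :=
  match p.2.getLast? with
  | none => p
  | some a => (Q.src a, [a])

/-- `l2(p)`: `p` with its last arrow removed. -/
def l2P (Q : Quiv) (p : PathDat Q) : PathDat Q := (p.1, p.2.dropLast)

/-- `r1(p)`: `p` with its first arrow removed. -/
def r1P (Q : Quiv) (p : PathDat Q) : PathDat Q :=
  match p.2 with
  | [] => p
  | a :: l => (Q.tgt a, l)

/-- `r2(p)`: the first arrow of `p` (as a path of length one). -/
def r2P (Q : Quiv) (p : PathDat Q) : PathDat Q :=
  match p.2 with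
  | [] => p
  | a :: _ => (Q.src a, [a])

/-- The raw first term `(α·l1(γ), l2(γ))` of the boundary of `(α, γ)`. -/
def d1raw (Q : Quiv) (x : PathDat Q × PathDat Q) : PathDat Q × PathDat Q :=
  match x.2.2.getLast? with
  | none => x
  | some a => ((Q.src a, a :: x.1.2), (x.2.1, x.2.2.dropLast))

/-- The raw second term `(r2(γ)·α, r1(γ))` of the boundary of `(α, γ)`. -/
def d2raw (Q : Quiv) (x : PathDat Q × PathDat Q) : PathDat Q × PathDat Q :=
  match x.2.2 with
  | [] => x
  | c :: l => ((x.1.1, x.1.2 ++ [c]), (Q.tgt c, l))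

/-- The boundary of a basis element:
`d_m (α, γ) = (α·l1(γ), l2(γ)) + (-1)^m (r2(γ)·α, r1(γ))` (in degree `m = m+1`),
where pairs whose first component is not in `B` are interpreted as `0`. -/
noncomputable def bdB (k : Type) [Field k] (Q : Quiv) (R : Set (Q.A × Q.A)) (m : ℕ)
    (x : BGt Q R (m + 1)) : Chn k Q R m :=
  bw k Q R m (d1raw Q x.val) + ((-1 : k) ^ (m + 1)) • bw k Q R m (d2raw Q x.val)

/-- The boundary map `d_{m+1} : k(B ⊙ Γ_{m+1}) → k(B ⊙ Γ_m)`. -/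
noncomputable def bd (k : Type) [Field k] (Q : Quiv) (R : Set (Q.A × Q.A)) (m : ℕ) :
    Chn k Q R (m + 1) →ₗ[k] Chn k Q R m :=
  Finsupp.linearCombination k (bdB k Q R m)

/-- The subspace of cycles in degree `m` (everything in degree `0`). -/
noncomputable def ZSp (k : Type) [Field k] (Q : Quiv) (R : Set (Q.A × Q.A)) :
    (m : ℕ) → Submodule k (Chn k Q R m)
  | 0 => ⊤
  | m + 1 => LinearMap.ker (bd k Q R m)

/-- The subspace of boundaries in degree `m`. -/
noncomputable def BSp (k : Type) [Field k] (Q : Quiv) (R : Set (Q.A × Q.A)) (m : ℕ) :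
    Submodule k (Chn k Q R m) :=
  LinearMap.range (bd k Q R m)

/-- The degree-`m` homology `HH_m` of the complex `k(B ⊙ Γ)` vanishes:
every cycle is a boundary. -/
def HomIsZero (k : Type) [Field k] (Q : Quiv) (R : Set (Q.A × Q.A)) (m : ℕ) : Prop :=
  ZSp k Q R m ≤ BSp k Q R m

/-- The degree-`m` homology `HH_m` of the complex `k(B ⊙ Γ)` is
finite-dimensional: there is a finite set of cycles whose classes span it. -/
def HomFinDim (k : Type) [Field k] (Q : Quiv) (R : Set (Q.A × Q.A)) (m : ℕ) : Prop :=
  ∃ G : Finset (Chn k Q R m), ↑G ⊆ (ZSp k Q R m : Set (Chn k Q R m)) ∧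
    ZSp k Q R m ≤ BSp k Q R m ⊔ Submodule.span k ↑G

/-- The concatenation `α γ` of an antiparallel pair (a cycle, or a trivial path). -/
def concatP (Q : Quiv) (x : PathDat Q × PathDat Q) : PathDat Q := (x.2.1, x.2.2 ++ x.1.2)

/-- The degree-`m` component of the subcomplex `k(B ⊙ Γ)_C`, spanned by the
basis elements whose concatenation lies in the circuit (rotation class) of `c`. -/
noncomputable def Wsp (k : Type) [Field k] (Q : Quiv) (R : Set (Q.A × Q.A))
    (c : PathDat Q) (m : ℕ) : Submodule k (Chn k Q R m) :=
  Submodule.span k {z : Chn k Q R m |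
    ∃ x : BGt Q R m, RotEquiv Q (concatP Q x.val) c ∧ z = Finsupp.single x (1 : k)}

/-- The boundaries of the subcomplex `k(B ⊙ Γ)_C` in degree `m`. -/
noncomputable def WB (k : Type) [Field k] (Q : Quiv) (R : Set (Q.A × Q.A))
    (c : PathDat Q) (m : ℕ) : Submodule k (Chn k Q R m) :=
  Submodule.map (bd k Q R m) (Wsp k Q R c (m + 1))

/-- The cycles of the subcomplex `k(B ⊙ Γ)_C` in degree `m`. -/
noncomputable def WZ (k : Type) [Field k] (Q : Quiv) (R : Set (Q.A × Q.A))
    (c : PathDat Q) (m : ℕ) : Submodule k (Chn k Q R m) :=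
  ZSp k Q R m ⊓ Wsp k Q R c m

/-- The degree-`m` homology of `k(B ⊙ Γ)_C` is one-dimensional, spanned by the
homology class of `v`. -/
def SubHomSpannedBy (k : Type) [Field k] (Q : Quiv) (R : Set (Q.A × Q.A))
    (c : PathDat Q) (m : ℕ) (v : Chn k Q R m) : Prop :=
  v ∈ WZ k Q R c m ∧ v ∉ WB k Q R c m ∧
  ∀ z ∈ WZ k Q R c m, ∃ t : k, z - t • v ∈ WB k Q R c m

/-- `ĥ(c) = Σ_{i=0}^{r-1} (r1(rot^i c), r2(rot^i c))` (degree 1, for cocomplete cycles;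
placed in degree `m`). -/
noncomputable def hCycR (k : Type) [Field k] (Q : Quiv) (R : Set (Q.A × Q.A)) (m : ℕ)
    (c : PathDat Q) : Chn k Q R m :=
  ∑ i ∈ Finset.range (periodP Q c),
    bw k Q R m (r1P Q (rotI Q i c), r2P Q (rotI Q i c))

/-- `ĥ(c) = Σ_{i=0}^{r-1} (-1)^{(m+1) i} (s(rot^i c), rot^i c)` (degree `m`, for
complete cycles of length `m`). -/
noncomputable def hCycM (k : Type) [Field k] (Q : Quiv) (R : Set (Q.A × Q.A)) (m : ℕ)
    (c : PathDat Q) : Chn k Q R m :=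
  ∑ i ∈ Finset.range (periodP Q c),
    ((-1 : k) ^ ((m + 1) * i)) • bw k Q R m ((psrc Q (rotI Q i c), []), rotI Q i c)

/-- The homology classes of the elements of `Gen` freely generate the degree-`m`
homology of `k(B ⊙ Γ)`. -/
def FreelyGeneratesHom (k : Type) [Field k] (Q : Quiv) (R : Set (Q.A × Q.A)) (m : ℕ)
    (Gen : Set (Chn k Q R m)) : Prop :=
  (∀ x ∈ Gen, x ∈ ZSp k Q R m) ∧
  (∀ z ∈ ZSp k Q R m, ∃ y : Chn k Q R (m + 1), z - bd k Q R m y ∈ Submodule.span k Gen) ∧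
  (∀ x ∈ Submodule.span k Gen, x ∈ LinearMap.range (bd k Q R m) → x = 0) ∧
  LinearIndependent k (fun x : Gen => (x : Chn k Q R m))

/-!
For a complete circuit `C` of length `l` and period `r`, every basis element `(α, γ)` of
`k(B ⊙ Γ)_C` has `α` of length at most one, since any two consecutive arrows of `C` are
related. So the subcomplex lives in degrees `l` and `l - 1`, with bases
`yᵢ = (s(rotⁱ C̄), rotⁱ C̄)` and `xᵢ = (l1(rotⁱ C̄), l2(rotⁱ C̄))` indexed by `i ∈ ℤ/r`.
The `xᵢ` are cycles and `d yᵢ₊₁ = xᵢ₊₁ - ε xᵢ` with `ε = (-1)^{l+1}`, so in these bases the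
complex is `1 - ε·shift : kʳ → kʳ`. Its kernel and cokernel are spanned by `∑ εⁱ yᵢ` and the
class of `x₀` when `εʳ = 1`, and vanish otherwise.
-/

lemma sum_range_shift {M : Type*} [AddCommMonoid M] [IsRightCancelAdd M] {f : ℕ → M} {r : ℕ}
    (h : f r = f 0) : ∑ i ∈ Finset.range r, f (i + 1) = ∑ i ∈ Finset.range r, f i :=
  add_right_cancel (b := f 0) <| by
    rw [← Finset.sum_range_succ', Finset.sum_range_succ, h]

section TwistedCycle

open Finsupp

variable {k α β : Type*} [Field k]

/-- The shape of `k(B ⊙ Γ)_C` in its two nonzero degrees: `d yᵢ₊₁ = xᵢ₊₁ - ε xᵢ` on two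
families of basis vectors indexed by `ℤ/r`. -/
structure IsTwistedCycle (d : (α →₀ k) →ₗ[k] (β →₀ k)) (y : ℕ → α) (x : ℕ → β) (r : ℕ)
    (ε : k) : Prop where
  pos : 0 < r
  periodic_y : Function.Periodic y r
  periodic_x : Function.Periodic x r
  injOn_y : Set.InjOn y (Set.Iio r)
  injOn_x : Set.InjOn x (Set.Iio r)
  sq : ε * ε = 1
  d_single : ∀ i, d (single (y (i + 1)) 1) = single (x (i + 1)) 1 - ε • single (x i) 1

/-- The paper's `ĥ(C̄)`, for `y i = (s(rotⁱ C̄), rotⁱ C̄)` and `ε = (-1)^{l+1}`. -/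
noncomputable def twistedSum (y : ℕ → α) (r : ℕ) (ε : k) : α →₀ k :=
  ∑ i ∈ Finset.range r, single (y i) (ε ^ i)

lemma sum_single_apply_of_injOn {y : ℕ → α} {r : ℕ} (hy : Set.InjOn y (Set.Iio r))
    (s : ℕ → k) {j : ℕ} (hj : j < r) :
    (∑ i ∈ Finset.range r, single (y i) (s i)) (y j) = s j := by
  classical
  rw [finsetSum_apply, Finset.sum_eq_single j]
  · exact single_eq_same
  · intro i hi hij
    exact single_eq_of_ne (fun h => hij (hy hj (Finset.mem_range.mp hi) h).symm)
  · exact fun h => absurd (Finset.mem_range.mpr hj) h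

lemma sum_single_eq_of_mem_supported {y : ℕ → α} {r : ℕ} (hy : Set.InjOn y (Set.Iio r))
    {z : α →₀ k} (hz : z ∈ supported k k (y '' Set.Iio r)) :
    ∑ i ∈ Finset.range r, single (y i) (z (y i)) = z := by
  classical
  have hsupp : z.support ⊆ (Finset.range r).image y := by
    intro a ha
    obtain ⟨i, hi, rfl⟩ := (mem_supported k z).mp hz ha
    exact Finset.mem_image_of_mem y (Finset.mem_range.mpr hi)
  conv_rhs => rw [← z.sum_single, z.sum_of_support_subset hsupp _ (fun _ _ => single_zero _)]
  rw [Finset.sum_image (fun i hi j hj h => hy (by simpa using hi) (by simpa using hj) h)]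

lemma single_mem_supported_image_Iio {y : ℕ → α} {r : ℕ} (hr : 0 < r) (hy : Function.Periodic y r)
    (i : ℕ) : single (y i) (1 : k) ∈ supported k k (y '' Set.Iio r) :=
  single_mem_supported k 1 ⟨i % r, Nat.mod_lt i hr, hy.map_mod_nat i⟩

lemma periodic_pow_of_pow_eq_one {ε : k} {r : ℕ} (hε : ε ^ r = 1) :
    Function.Periodic (ε ^ ·) r := fun i => by
  simp only [pow_add, hε, mul_one]

lemma twistedSum_mem_supported (y : ℕ → α) (r : ℕ) (ε : k) :
    twistedSum y r ε ∈ supported k k (y '' Set.Iio r) :=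
  Submodule.sum_mem _ fun i hi =>
    single_mem_supported k _ ⟨i, Finset.mem_range.mp hi, rfl⟩

namespace IsTwistedCycle

variable {d : (α →₀ k) →ₗ[k] (β →₀ k)} {y : ℕ → α} {x : ℕ → β} {r : ℕ} {ε : k}
variable (h : IsTwistedCycle d y x r ε)
include h

lemma d_sum {t : ℕ → k} (ht : Function.Periodic t r) :
    d (∑ i ∈ Finset.range r, single (y i) (t i)) =
      ∑ i ∈ Finset.range r, single (x i) (t i - ε * t (i + 1)) := by
  have hy : single (y r) (t r) = single (y 0) (t 0) := by
    rw [← zero_add r, h.periodic_y 0, ht 0]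
  have hx : single (x r) (t r) = single (x 0) (t 0) := by
    rw [← zero_add r, h.periodic_x 0, ht 0]
  have hterm : ∀ i, d (single (y (i + 1)) (t (i + 1))) =
      single (x (i + 1)) (t (i + 1)) - single (x i) (ε * t (i + 1)) := by
    intro i
    rw [← smul_single_one, map_smul, h.d_single, smul_sub, smul_smul, smul_single_one,
      smul_single_one, mul_comm]
  rw [← sum_range_shift (f := fun i => single (y i) (t i)) hy, map_sum]
  simp only [hterm, Finset.sum_sub_distrib]
  rw [sum_range_shift (f := fun i => single (x i) (t i)) hx, ← Finset.sum_sub_distrib]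
  simp only [single_sub]

lemma apply_y_of_d_eq_zero {z : α →₀ k} (hz : z ∈ supported k k (y '' Set.Iio r))
    (hdz : d z = 0) {i : ℕ} (hi : i ≤ r) : z (y i) = ε ^ i * z (y 0) := by
  have ht : Function.Periodic (fun i => z (y i)) r := fun i => by simp only [h.periodic_y i]
  rw [← sum_single_eq_of_mem_supported h.injOn_y hz, h.d_sum ht] at hdz
  have hrec : ∀ j < r, z (y j) = ε * z (y (j + 1)) := fun j hj => by
    have hxj := congrArg (· (x j)) hdz
    simp only [sum_single_apply_of_injOn h.injOn_x _ hj, coe_zero, Pi.zero_apply] at hxj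
    exact sub_eq_zero.mp hxj
  induction i with
  | zero => rw [pow_zero, one_mul]
  | succ n ih =>
    calc z (y (n + 1)) = ε * ε * z (y (n + 1)) := by rw [h.sq, one_mul]
      _ = ε * z (y n) := by rw [hrec n (by omega), mul_assoc]
      _ = ε ^ (n + 1) * z (y 0) := by rw [ih (by omega), pow_succ', mul_assoc]

lemma eq_smul_twistedSum_of_d_eq_zero {z : α →₀ k} (hz : z ∈ supported k k (y '' Set.Iio r))
    (hdz : d z = 0) : z = z (y 0) • twistedSum y r ε := by
  conv_lhs => rw [← sum_single_eq_of_mem_supported h.injOn_y hz]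
  rw [twistedSum, Finset.smul_sum]
  refine Finset.sum_congr rfl fun i hi => ?_
  rw [h.apply_y_of_d_eq_zero hz hdz (Finset.mem_range.mp hi).le, smul_single, smul_eq_mul,
    mul_comm]

lemma pow_mul_eq_of_d_eq_zero {z : α →₀ k} (hz : z ∈ supported k k (y '' Set.Iio r))
    (hdz : d z = 0) : ε ^ r * z (y 0) = z (y 0) := by
  rw [← h.apply_y_of_d_eq_zero hz hdz le_rfl, ← zero_add r, h.periodic_y]

lemma eq_zero_of_d_eq_zero (hε : ε ^ r ≠ 1) {z : α →₀ k}
    (hz : z ∈ supported k k (y '' Set.Iio r)) (hdz : d z = 0) : z = 0 := by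
  have h0 : z (y 0) = 0 := by
    by_contra hne
    exact hε (mul_right_cancel₀ hne (by rw [one_mul, h.pow_mul_eq_of_d_eq_zero hz hdz]))
  rw [h.eq_smul_twistedSum_of_d_eq_zero hz hdz, h0, zero_smul]

lemma d_twistedSum (hε : ε ^ r = 1) : d (twistedSum y r ε) = 0 := by
  rw [twistedSum, h.d_sum (periodic_pow_of_pow_eq_one hε)]
  refine Finset.sum_eq_zero fun i _ => ?_
  rw [pow_succ', ← mul_assoc, h.sq, one_mul, sub_self, single_zero]

lemma twistedSum_ne_zero : twistedSum y r ε ≠ 0 := fun h0 => by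
  simpa [twistedSum, sum_single_apply_of_injOn h.injOn_y _ h.pos] using congrArg (· (y 0)) h0

lemma sum_single_succ_eq_smul_twistedSum (hε : ε ^ r = 1) :
    ∑ i ∈ Finset.range r, single (y (i + 1)) (ε ^ i) = ε • twistedSum y r ε := by
  rw [twistedSum, ← sum_range_shift (f := fun i => single (y i) (ε ^ i))
    (by rw [hε, pow_zero, ← zero_add r, h.periodic_y]), Finset.smul_sum]
  refine Finset.sum_congr rfl fun i _ => ?_
  rw [smul_single, smul_eq_mul, pow_succ', ← mul_assoc, h.sq, one_mul]

lemma single_x_sub_mem_map (j : ℕ) :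
    single (x j) 1 - ε ^ j • single (x 0) (1 : k) ∈ (supported k k (y '' Set.Iio r)).map d := by
  induction j with
  | zero => rw [pow_zero, one_smul, sub_self]; exact zero_mem _
  | succ n ih =>
    have hdy : d (single (y (n + 1)) 1) ∈ (supported k k (y '' Set.Iio r)).map d :=
      Submodule.mem_map_of_mem (single_mem_supported_image_Iio h.pos h.periodic_y _)
    convert add_mem hdy (Submodule.smul_mem _ ε ih) using 1
    rw [h.d_single, smul_sub, smul_smul, ← pow_succ']
    abel

lemma single_x_zero_not_mem_map (hε : ε ^ r = 1) :
    single (x 0) (1 : k) ∉ (supported k k (y '' Set.Iio r)).map d := by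
  classical
  -- `φ w = ∑_{j<r} ε^j w(x j)` vanishes on the image of `d` but not on `x 0`.
  let φ : (β →₀ k) →ₗ[k] k := ∑ j ∈ Finset.range r, ε ^ j • lapply (x j)
  have hφ : ∀ i, φ (single (x i) 1) = ε ^ i := fun i => by
    rw [← h.periodic_x.map_mod_nat, ← (periodic_pow_of_pow_eq_one hε).map_mod_nat]
    simp only [φ, LinearMap.sum_apply, LinearMap.smul_apply, lapply_apply, smul_eq_mul]
    rw [Finset.sum_eq_single (i % r)]
    · rw [single_eq_same, mul_one]
    · intro j hj hne
      rw [single_eq_of_ne fun he =>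
        hne (h.injOn_x (Finset.mem_range.mp hj) (Nat.mod_lt i h.pos) he), mul_zero]
    · simp [Nat.mod_lt i h.pos]
  have hker : (supported k k (y '' Set.Iio r)).map d ≤ LinearMap.ker φ := by
    rw [supported_eq_span_single, Submodule.map_span, Submodule.span_le]
    rintro _ ⟨_, ⟨_, ⟨i, -, rfl⟩, rfl⟩, rfl⟩
    have hi : y i = y (i + r - 1 + 1) := by
      rw [Nat.sub_add_cancel (by have := h.pos; omega), h.periodic_y]
    simp only [SetLike.mem_coe, LinearMap.mem_ker]
    rw [hi, h.d_single, map_sub, map_smul, hφ, hφ, smul_eq_mul, pow_succ', sub_self]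
  intro hmem
  simpa [hφ] using hker hmem

lemma exists_sub_smul_mem_map {z : β →₀ k} (hz : z ∈ supported k k (x '' Set.Iio r)) :
    ∃ t : k, z - t • single (x 0) 1 ∈ (supported k k (y '' Set.Iio r)).map d := by
  refine ⟨∑ j ∈ Finset.range r, z (x j) * ε ^ j, ?_⟩
  have hsplit : z - (∑ j ∈ Finset.range r, z (x j) * ε ^ j) • single (x 0) 1 =
      ∑ j ∈ Finset.range r, z (x j) • (single (x j) 1 - ε ^ j • single (x 0) 1) := by
    simp only [smul_sub, smul_smul, Finset.sum_sub_distrib, ← Finset.sum_smul]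
    congr 1
    simp only [smul_single_one]
    exact (sum_single_eq_of_mem_supported h.injOn_x hz).symm
  rw [hsplit]
  exact Submodule.sum_mem _ fun j _ => Submodule.smul_mem _ _ (h.single_x_sub_mem_map j)

lemma supported_x_le_map (hε : ε ^ r ≠ 1) :
    supported k k (x '' Set.Iio r) ≤ (supported k k (y '' Set.Iio r)).map d := by
  have hx0 : single (x 0) (1 : k) ∈ (supported k k (y '' Set.Iio r)).map d := by
    have hsub := h.single_x_sub_mem_map r
    rw [← zero_add r, h.periodic_x, zero_add] at hsub
    have hsub' : (1 - ε ^ r) • single (x 0) (1 : k) ∈ (supported k k (y '' Set.Iio r)).map d := by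
      rwa [sub_smul, one_smul]
    have := Submodule.smul_mem _ (1 - ε ^ r)⁻¹ hsub'
    rwa [smul_smul, inv_mul_cancel₀ (sub_ne_zero.mpr (Ne.symm hε)), one_smul] at this
  intro z hz
  obtain ⟨t, ht⟩ := h.exists_sub_smul_mem_map hz
  simpa using add_mem ht (Submodule.smul_mem _ t hx0)

end IsTwistedCycle

end TwistedCycle

section Paths

variable {Q : Quiv} {R : Set (Q.A × Q.A)}

/-- `IsCycle` restated on the list of arrows, with the closing condition on the last arrow. -/
structure ClosedPath (Q : Quiv) (p : PathDat Q) : Prop where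
  ne_nil : p.2 ≠ []
  chain : p.2.IsChain (fun a b => Q.tgt a = Q.src b)
  src_head : ∀ a ∈ p.2.head?, Q.src a = p.1
  tgt_getLast : ∀ a ∈ p.2.getLast?, Q.tgt a = p.1

/-- `Complete` restated without squaring: the relation `R` also holds cyclically,
across the junction of the last and the first arrow. -/
structure CompleteCycle (Q : Quiv) (R : Set (Q.A × Q.A)) (p : PathDat Q) : Prop
    extends ClosedPath Q p where
  chain_rel : p.2.IsChain (fun a b => (a, b) ∈ R)
  wrap_rel : ∀ a ∈ p.2.getLast?, ∀ b ∈ p.2.head?, (a, b) ∈ R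

lemma ptgt_of_mem_getLast? {p : PathDat Q} {a : Q.A} (ha : a ∈ p.2.getLast?) :
    ptgt Q p = Q.tgt a := by
  simp [ptgt, Option.mem_def.mp ha]

lemma ptgt_append_singleton (v : Q.V) (l : List Q.A) (a : Q.A) :
    ptgt Q (v, l ++ [a]) = Q.tgt a :=
  ptgt_of_mem_getLast? List.getLast?_concat

lemma Complete.completeCycle {c : PathDat Q} (hc : Complete Q R c) : CompleteCycle Q R c := by
  obtain ⟨⟨⟨hchain, hhead⟩, hne, hcyc⟩, -, hR⟩ := hc
  have hR : (c.2 ++ c.2).IsChain (fun a b => (a, b) ∈ R) := by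
    simp only [powP, powL, List.append_nil] at hR
    exact hR
  exact ⟨⟨hne, hchain, hhead, fun a ha => (ptgt_of_mem_getLast? ha).symm.trans hcyc.symm⟩,
    (List.isChain_append.mp hR).1, (List.isChain_append.mp hR).2.2⟩

lemma ClosedPath.exists_eq {p : PathDat Q} (hp : ClosedPath Q p) :
    ∃ l a, p = (Q.tgt a, l ++ [a]) := by
  obtain ⟨v, l⟩ := p
  obtain rfl | ⟨l, a, rfl⟩ := List.eq_nil_or_concat' l
  · exact absurd rfl hp.ne_nil
  · refine ⟨l, a, ?_⟩
    rw [hp.tgt_getLast a (by simp)]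

lemma ClosedPath.eq_of_snd_eq {p p' : PathDat Q} (hp : ClosedPath Q p) (hp' : ClosedPath Q p')
    (h : p.2 = p'.2) : p = p' := by
  obtain ⟨a, l, hl⟩ := List.exists_cons_of_ne_nil hp.ne_nil
  have ha : a ∈ p.2.head? := by simp [hl]
  exact Prod.ext ((hp.src_head a ha).symm.trans (hp'.src_head a (h ▸ ha))) h

lemma rotP_append_singleton (v : Q.V) (l : List Q.A) (a : Q.A) :
    rotP Q (v, l ++ [a]) = (Q.src a, a :: l) := by
  simp [rotP]

lemma rotI_add (i j : ℕ) (p : PathDat Q) : rotI Q (i + j) p = rotI Q i (rotI Q j p) :=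
  Function.iterate_add_apply _ i j p

lemma rotI_succ (i : ℕ) (p : PathDat Q) : rotI Q (i + 1) p = rotI Q i (rotP Q p) :=
  Function.iterate_succ_apply _ i p

lemma rotI_succ' (i : ℕ) (p : PathDat Q) : rotI Q (i + 1) p = rotP Q (rotI Q i p) :=
  Function.iterate_succ_apply' _ i p

lemma length_rotP (p : PathDat Q) : (rotP Q p).2.length = p.2.length := by
  obtain ⟨v, l⟩ := p
  obtain rfl | ⟨l, a, rfl⟩ := List.eq_nil_or_concat' l
  · rfl
  · simp [rotP_append_singleton]

lemma length_rotI (i : ℕ) (p : PathDat Q) : (rotI Q i p).2.length = p.2.length := by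
  induction i with
  | zero => rfl
  | succ n ih => rw [rotI_succ', length_rotP, ih]

lemma snd_rotI_length_append (w : Q.V) (u v : List Q.A) :
    (rotI Q v.length (w, u ++ v)).2 = v ++ u := by
  induction v using List.reverseRecOn generalizing u w with
  | nil => simp [rotI]
  | append_singleton v a ih =>
    rw [List.length_append, List.length_singleton, rotI_succ, ← List.append_assoc,
      rotP_append_singleton, ← List.singleton_append, ← List.append_assoc, ih]
    simp

lemma ClosedPath.rot {p : PathDat Q} (hp : ClosedPath Q p) : ClosedPath Q (rotP Q p) := by
  obtain ⟨l, a, rfl⟩ := hp.exists_eq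
  rw [rotP_append_singleton]
  have hchain := List.isChain_append.mp hp.chain
  refine ⟨List.cons_ne_nil a l, List.isChain_cons.mpr ⟨fun b hb => ?_, hchain.1⟩,
    fun _ hb => (Option.mem_some_iff.mp hb).symm ▸ rfl, fun b hb => ?_⟩
  · exact (hp.src_head b (by simp [List.head?_append, Option.mem_def.mp hb])).symm
  · obtain rfl | ⟨l', b', rfl⟩ := List.eq_nil_or_concat' l
    · obtain rfl : a = b := by simpa using hb
      exact (hp.src_head a (by simp)).symm
    · rw [← List.cons_append, List.getLast?_concat, Option.mem_some_iff] at hb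
      subst hb
      exact hchain.2.2 b' (by simp) a rfl

lemma CompleteCycle.rot {p : PathDat Q} (hp : CompleteCycle Q R p) :
    CompleteCycle Q R (rotP Q p) := by
  obtain ⟨l, a, rfl⟩ := hp.exists_eq
  have hR := List.isChain_append.mp hp.chain_rel
  have hwrap : ∀ b ∈ l.head?, (a, b) ∈ R := fun b hb =>
    hp.wrap_rel a (by simp) b (by simp [List.head?_append, Option.mem_def.mp hb])
  refine ⟨hp.toClosedPath.rot, ?_, ?_⟩ <;> rw [rotP_append_singleton]
  · exact List.isChain_cons.mpr ⟨hwrap, hR.1⟩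
  · intro b hb a' ha'
    obtain rfl : a' = a := by simpa using ha'.symm
    obtain rfl | ⟨l', b', rfl⟩ := List.eq_nil_or_concat' l
    · obtain rfl : a' = b := by simpa using hb
      exact hp.wrap_rel a' (by simp) a' (by simp)
    · rw [← List.cons_append, List.getLast?_concat, Option.mem_some_iff] at hb
      subst hb
      exact hR.2.2 b' (by simp) a' rfl

lemma CompleteCycle.of_rot {p : PathDat Q} (hp : ClosedPath Q p)
    (h : CompleteCycle Q R (rotP Q p)) : CompleteCycle Q R p := by
  obtain ⟨l, a, rfl⟩ := hp.exists_eq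
  obtain ⟨-, hR, hwrap⟩ := h
  rw [rotP_append_singleton] at hR hwrap
  have hR := List.isChain_cons.mp hR
  refine ⟨hp, List.isChain_append.mpr ⟨hR.2, List.isChain_singleton a, ?_⟩, ?_⟩
  · intro b hb a' ha'
    obtain rfl : a' = a := by simpa using ha'.symm
    obtain rfl | ⟨l', b', rfl⟩ := List.eq_nil_or_concat' l
    · simp at hb
    · obtain rfl : b' = b := by simpa using hb
      exact hwrap b' (by rw [← List.cons_append, List.getLast?_concat]; rfl) a' rfl
  · intro b hb a' ha'
    obtain rfl : a = b := by simpa using hb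
    obtain rfl | ⟨l', b', rfl⟩ := List.eq_nil_or_concat' l
    · obtain rfl : a = a' := by simpa using ha'
      exact hwrap a (by simp) a (by simp)
    · exact hR.1 a' (by simpa [List.head?_append] using ha')

lemma ClosedPath.rot_iter {p : PathDat Q} (hp : ClosedPath Q p) (i : ℕ) :
    ClosedPath Q (rotI Q i p) := by
  induction i with
  | zero => exact hp
  | succ n ih => rw [rotI_succ']; exact ih.rot

lemma CompleteCycle.rot_iter {p : PathDat Q} (hp : CompleteCycle Q R p) (i : ℕ) :
    CompleteCycle Q R (rotI Q i p) := by
  induction i with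
  | zero => exact hp
  | succ n ih => rw [rotI_succ']; exact ih.rot

lemma CompleteCycle.of_rot_iter {p : PathDat Q} (hp : ClosedPath Q p) (i : ℕ)
    (h : CompleteCycle Q R (rotI Q i p)) : CompleteCycle Q R p := by
  induction i generalizing p with
  | zero => exact h
  | succ n ih =>
    rw [rotI_succ] at h
    exact .of_rot hp (ih hp.rot h)

lemma ClosedPath.rotI_length {p : PathDat Q} (hp : ClosedPath Q p) : rotI Q p.2.length p = p :=
  (hp.rot_iter _).eq_of_snd_eq hp (by simpa using snd_rotI_length_append (Q := Q) p.1 [] p.2)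

lemma ClosedPath.rotI_mul_length {p : PathDat Q} (hp : ClosedPath Q p) (n : ℕ) :
    rotI Q (n * p.2.length) p = p := by
  induction n with
  | zero => rw [zero_mul]; rfl
  | succ m ih => rw [Nat.succ_mul, rotI_add, hp.rotI_length, ih]

lemma ClosedPath.rotP_inj {p p' : PathDat Q} (hp : ClosedPath Q p) (hp' : ClosedPath Q p')
    (h : rotP Q p = rotP Q p') : p = p' := by
  obtain ⟨l, a, rfl⟩ := hp.exists_eq
  obtain ⟨l', a', rfl⟩ := hp'.exists_eq
  simp only [rotP_append_singleton, Prod.mk.injEq, List.cons.injEq] at h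
  obtain ⟨-, rfl, rfl⟩ := h
  rfl

end Paths

section Period

variable {Q : Quiv} {p : PathDat Q}

lemma ClosedPath.periodP_spec (hp : ClosedPath Q p) :
    1 ≤ periodP Q p ∧ rotI Q (periodP Q p) p = p :=
  Nat.sInf_mem (s := {i | 1 ≤ i ∧ rotI Q i p = p})
    ⟨p.2.length, List.length_pos_of_ne_nil hp.ne_nil, hp.rotI_length⟩

lemma ClosedPath.periodP_pos (hp : ClosedPath Q p) : 0 < periodP Q p :=
  hp.periodP_spec.1

lemma ClosedPath.periodic_rotI (hp : ClosedPath Q p) :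
    Function.Periodic (fun i => rotI Q i p) (periodP Q p) := fun i => by
  simp only [rotI_add, hp.periodP_spec.2]

lemma ClosedPath.injOn_rotI (hp : ClosedPath Q p) :
    Set.InjOn (fun i => rotI Q i p) (Set.Iio (periodP Q p)) := by
  have key : ∀ i j, j < periodP Q p → i < j → rotI Q i p ≠ rotI Q j p := by
    intro i j hj hij heq
    have hback : rotI Q (periodP Q p - j + i) p = p := by
      rw [rotI_add, heq, ← rotI_add, Nat.sub_add_cancel hj.le, hp.periodP_spec.2]
    have : periodP Q p ≤ periodP Q p - j + i := Nat.sInf_le ⟨by omega, hback⟩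
    omega
  intro i hi j hj hij
  rcases lt_trichotomy i j with hlt | heq | hgt
  · exact absurd hij (key i j hj hlt)
  · exact heq
  · exact absurd hij.symm (key j i hi hgt)

lemma ClosedPath.periodP_rotP (hp : ClosedPath Q p) : periodP Q (rotP Q p) = periodP Q p := by
  have hset : ∀ i, rotI Q i (rotP Q p) = rotP Q p ↔ rotI Q i p = p := fun i => by
    rw [← rotI_succ, rotI_succ']
    exact ⟨(hp.rot_iter i).rotP_inj hp, fun h => by rw [h]⟩
  simp only [periodP, hset]

lemma ClosedPath.rotI_rotI_eq (hp : ClosedPath Q p) (i : ℕ) :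
    rotI Q (i * (p.2.length - 1)) (rotI Q i p) = p := by
  rw [← rotI_add, ← Nat.mul_succ, Nat.succ_eq_add_one,
    Nat.sub_add_cancel (List.length_pos_of_ne_nil hp.ne_nil), hp.rotI_mul_length]

lemma ClosedPath.rotEquiv_rotI (hp : ClosedPath Q p) (i : ℕ) : RotEquiv Q (rotI Q i p) p :=
  ⟨_, hp.rotI_rotI_eq i⟩

end Period

section Pairs

variable {Q : Quiv} {R : Set (Q.A × Q.A)}

def fullPair (p : PathDat Q) : PathDat Q × PathDat Q := ((p.1, []), p)

def lastArrowPair (p : PathDat Q) : PathDat Q × PathDat Q := (l1P Q p, l2P Q p)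

lemma lastArrowPair_append_singleton (v : Q.V) (l : List Q.A) (a : Q.A) :
    lastArrowPair (v, l ++ [a]) = ((Q.src a, [a]), (v, l)) := by
  simp [lastArrowPair, l1P, l2P]

lemma concatP_fullPair (p : PathDat Q) : concatP Q (fullPair p) = p := by
  simp [concatP, fullPair]

lemma ClosedPath.concatP_lastArrowPair {p : PathDat Q} (hp : ClosedPath Q p) :
    concatP Q (lastArrowPair p) = p := by
  obtain ⟨l, a, rfl⟩ := hp.exists_eq
  rw [lastArrowPair_append_singleton]
  rfl

lemma ClosedPath.ptgt_eq {p : PathDat Q} (hp : ClosedPath Q p) : ptgt Q p = p.1 := by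
  obtain ⟨l, a, rfl⟩ := hp.exists_eq
  exact ptgt_append_singleton _ _ _

lemma ClosedPath.ptgt_dropLast {l : List Q.A} {a : Q.A}
    (hp : ClosedPath Q (Q.tgt a, l ++ [a])) : ptgt Q (Q.tgt a, l) = Q.src a := by
  obtain rfl | ⟨l', b, rfl⟩ := List.eq_nil_or_concat' l
  · exact (hp.src_head a (by simp)).symm
  · rw [ptgt_append_singleton]
    exact (List.isChain_append.mp hp.chain).2.2 b (by simp) a rfl

lemma CompleteCycle.bgMem_fullPair {p : PathDat Q} (hp : CompleteCycle Q R p) {m : ℕ}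
    (hm : p.2.length = m) : BGmem Q R m (fullPair p) :=
  ⟨⟨⟨List.isChain_nil, by simp [fullPair]⟩, List.isChain_nil⟩,
    ⟨⟨hp.chain, hp.src_head⟩, hp.chain_rel⟩, hm, hp.ptgt_eq.symm, rfl⟩

lemma CompleteCycle.bgMem_lastArrowPair {p : PathDat Q} (hp : CompleteCycle Q R p) {m : ℕ}
    (hm : p.2.length = m + 1) : BGmem Q R m (lastArrowPair p) := by
  obtain ⟨l, a, rfl⟩ := hp.exists_eq
  rw [lastArrowPair_append_singleton]
  have hchain := List.isChain_append.mp hp.chain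
  refine ⟨⟨⟨List.isChain_singleton a, by simp⟩, List.isChain_singleton a⟩,
    ⟨⟨hchain.1, fun b hb => hp.src_head b ?_⟩, (List.isChain_append.mp hp.chain_rel).1⟩,
    by simpa [plen] using hm, hp.ptgt_dropLast.symm, ptgt_append_singleton _ [] a⟩
  simp [List.head?_append, Option.mem_def.mp hb]

lemma closedPath_concatP {m : ℕ} {x : PathDat Q × PathDat Q} (hx : BGmem Q R m x)
    (hne : (concatP Q x).2 ≠ []) : ClosedPath Q (concatP Q x) := by
  obtain ⟨⟨v1, al⟩, ⟨v2, gl⟩⟩ := x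
  obtain ⟨⟨⟨hBc, hBs⟩, -⟩, ⟨⟨hGc, hGs⟩, -⟩, -, hA1, hA2⟩ := hx
  simp only [concatP] at hne ⊢
  change v1 = ptgt Q (v2, gl) at hA1
  change ptgt Q (v1, al) = v2 at hA2
  refine ⟨hne, List.isChain_append.mpr ⟨hGc, hBc, fun b hb a ha => ?_⟩, fun y hy => ?_,
    fun y hy => ?_⟩
  · rw [hBs a ha, hA1, ptgt_of_mem_getLast? hb]
  · cases gl with
    | nil => rw [hBs y (by simpa using hy), hA1]; rfl
    | cons b t => exact hGs y (by simpa using hy)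
  · obtain rfl | ⟨l', a, rfl⟩ := List.eq_nil_or_concat' al
    · rw [List.append_nil] at hy
      rw [← ptgt_of_mem_getLast? hy, ← hA1, ← hA2]
      rfl
    · rw [← List.append_assoc, List.getLast?_concat, Option.mem_some_iff] at hy
      rw [← hy, ← hA2, ptgt_append_singleton]

/-- A `B`-part of length two or more cannot sit inside a complete cycle, whose consecutive
arrows are all related. -/
lemma CompleteCycle.exists_eq_pair_of_rotEquiv {c : PathDat Q} (hc : CompleteCycle Q R c)
    {m : ℕ} {x : PathDat Q × PathDat Q} (hx : BGmem Q R m x)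
    (hrot : RotEquiv Q (concatP Q x) c) :
    ∃ i < periodP Q c, (m = c.2.length ∧ x = fullPair (rotI Q i c)) ∨
      (m + 1 = c.2.length ∧ x = lastArrowPair (rotI Q i c)) := by
  obtain ⟨j, hj⟩ := hrot
  have hlen : (concatP Q x).2.length = c.2.length := by rw [← hj, length_rotI]
  have hcl : ClosedPath Q (concatP Q x) :=
    closedPath_concatP hx fun h => hc.ne_nil (List.eq_nil_of_length_eq_zero (by simp_all))
  have hcx : CompleteCycle Q R (concatP Q x) := .of_rot_iter hcl j (hj ▸ hc)
  refine ⟨j * (c.2.length - 1) % periodP Q c, Nat.mod_lt _ hc.periodP_pos, ?_⟩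
  have hmod := hc.periodic_rotI.map_mod_nat (j * (c.2.length - 1))
  have hback : rotI Q (j * (c.2.length - 1)) c = concatP Q x := by
    rw [← hlen, ← hj]
    exact hcl.rotI_rotI_eq j
  rw [hmod, hback, ← hlen]
  obtain ⟨⟨v1, al⟩, ⟨v2, gl⟩⟩ := x
  obtain ⟨⟨⟨-, hBs⟩, hBR⟩, -, rfl, -, hA2⟩ := hx
  rcases al with _ | ⟨a, _ | ⟨b, t⟩⟩
  · left
    change v1 = v2 at hA2
    simp [concatP, fullPair, plen, hA2]
  · right
    rw [show concatP Q ((v1, [a]), (v2, gl)) = (v2, gl ++ [a]) from rfl,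
      lastArrowPair_append_singleton, hBs a rfl]
    simp [plen]
  · have hR := (List.isChain_append.mp hcx.chain_rel).2.1
    exact absurd (List.isChain_cons_cons.mp hR).1 (List.isChain_cons_cons.mp hBR).1

end Pairs

section Boundary

open Finsupp

variable (k : Type) [Field k] {Q : Quiv} {R : Set (Q.A × Q.A)}

lemma bw_of_mem {m : ℕ} {x : PathDat Q × PathDat Q} (h : BGmem Q R m x) :
    bw k Q R m x = single ⟨x, h⟩ 1 :=
  dif_pos h

lemma bw_of_not_mem {m : ℕ} {x : PathDat Q × PathDat Q} (h : ¬ BGmem Q R m x) :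
    bw k Q R m x = 0 :=
  dif_neg h

lemma bw_of_rel {m : ℕ} {v : Q.V} {a b : Q.A} (hab : (a, b) ∈ R) (γ : PathDat Q) :
    bw k Q R m ((v, [a, b]), γ) = 0 :=
  bw_of_not_mem k fun h => (List.isChain_cons_cons.mp h.1.2).1 hab

lemma bd_single {m : ℕ} (x : BGt Q R (m + 1)) : bd k Q R m (single x 1) = bdB k Q R m x := by
  rw [bd, linearCombination_single, one_smul]

lemma ClosedPath.d1raw_fullPair {p : PathDat Q} (hp : ClosedPath Q p) :
    d1raw Q (fullPair p) = lastArrowPair p := by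
  obtain ⟨l, a, rfl⟩ := hp.exists_eq
  simp [d1raw, fullPair, lastArrowPair_append_singleton]

lemma ClosedPath.d2raw_fullPair_rotP {p : PathDat Q} (hp : ClosedPath Q p) :
    d2raw Q (fullPair (rotP Q p)) = lastArrowPair p := by
  obtain ⟨l, a, rfl⟩ := hp.exists_eq
  simp [rotP_append_singleton, d2raw, fullPair, lastArrowPair_append_singleton]

/-- Both terms of the boundary of `(l1(p), l2(p))` have a `B`-part of length two
made of consecutive arrows of the complete cycle `p`, hence related. -/
lemma CompleteCycle.bd_single_lastArrowPair {p : PathDat Q} (hp : CompleteCycle Q R p) {M : ℕ}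
    (hlen : p.2.length = M + 2) (x : BGt Q R (M + 1)) (hx : x.val = lastArrowPair p) :
    bd k Q R M (single x 1) = 0 := by
  obtain ⟨l, a, rfl⟩ := hp.exists_eq
  obtain ⟨l', b, rfl⟩ : ∃ l' b, l = l' ++ [b] :=
    (List.eq_nil_or_concat' l).resolve_left (by rintro rfl; simp at hlen)
  obtain ⟨c₁, t, hl⟩ := List.exists_cons_of_ne_nil (List.concat_ne_nil b l')
  have hba : (b, a) ∈ R := (List.isChain_append.mp hp.chain_rel).2.2 b (by simp) a rfl
  have hac : (a, c₁) ∈ R := hp.wrap_rel a (by simp) c₁ (by simp [hl])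
  have h₁ : d1raw Q ((Q.src a, [a]), (Q.tgt a, l' ++ [b])) =
      ((Q.src b, [b, a]), (Q.tgt a, l')) := by
    simp [d1raw]
  have h₂ : d2raw Q ((Q.src a, [a]), (Q.tgt a, l' ++ [b])) =
      ((Q.src a, [a, c₁]), (Q.tgt c₁, t)) := by
    simp [d2raw, hl]
  rw [bd_single, bdB, hx, lastArrowPair_append_singleton, h₁, h₂, bw_of_rel k hba,
    bw_of_rel k hac, smul_zero, add_zero]

end Boundary

section Circuit

open Finsupp

variable {Q : Quiv} {R : Set (Q.A × Q.A)} {c : PathDat Q} {L : ℕ}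

def fullPairBasis (hc : CompleteCycle Q R c) (hL : c.2.length = L + 1) (i : ℕ) :
    BGt Q R (L + 1) :=
  ⟨fullPair (rotI Q i c), (hc.rot_iter i).bgMem_fullPair (by rw [length_rotI, hL])⟩

def lastArrowPairBasis (hc : CompleteCycle Q R c) (hL : c.2.length = L + 1) (i : ℕ) :
    BGt Q R L :=
  ⟨lastArrowPair (rotI Q i c), (hc.rot_iter i).bgMem_lastArrowPair (by rw [length_rotI, hL])⟩

variable (k : Type) [Field k] (hc : CompleteCycle Q R c) (hL : c.2.length = L + 1)

lemma bw_fullPair_rotI (i : ℕ) :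
    bw k Q R (L + 1) (fullPair (rotI Q i c)) = single (fullPairBasis hc hL i) 1 :=
  bw_of_mem k _

lemma bw_lastArrowPair_rotI (i : ℕ) :
    bw k Q R L (lastArrowPair (rotI Q i c)) = single (lastArrowPairBasis hc hL i) 1 :=
  bw_of_mem k _

lemma isTwistedCycle_bd :
    IsTwistedCycle (bd k Q R L) (fullPairBasis hc hL) (lastArrowPairBasis hc hL) (periodP Q c)
      ((-1 : k) ^ (L + 2)) where
  pos := hc.periodP_pos
  periodic_y i := Subtype.ext (congrArg fullPair (hc.periodic_rotI i))
  periodic_x i := Subtype.ext (congrArg lastArrowPair (hc.periodic_rotI i))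
  injOn_y _ hi _ hj h := hc.injOn_rotI hi hj (congrArg (fun x => x.val.2) h)
  injOn_x i hi j hj h := hc.injOn_rotI hi hj <| by
    simpa [lastArrowPairBasis, (hc.rot_iter _).concatP_lastArrowPair] using
      congrArg (fun x => concatP Q x.val) h
  sq := by rw [← pow_add, Even.neg_one_pow ⟨L + 2, rfl⟩]
  d_single i := by
    rw [bd_single, bdB, show (fullPairBasis hc hL (i + 1)).val = fullPair (rotI Q (i + 1) c)
      from rfl, (hc.rot_iter _).d1raw_fullPair, rotI_succ', (hc.rot_iter i).d2raw_fullPair_rotP,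
      ← rotI_succ', bw_lastArrowPair_rotI k hc hL, bw_lastArrowPair_rotI k hc hL,
      pow_succ _ (L + 1), mul_neg_one, neg_smul, sub_neg_eq_add]

lemma Wsp_eq_supported (m : ℕ) :
    Wsp k Q R c m = supported k k {x : BGt Q R m | RotEquiv Q (concatP Q x.val) c} := by
  rw [supported_eq_span_single, Wsp]
  congr 1
  ext z
  simp [eq_comm]

lemma Wsp_succ_eq_supported_fullPairBasis :
    Wsp k Q R c (L + 1) = supported k k (fullPairBasis hc hL '' Set.Iio (periodP Q c)) := by
  rw [Wsp_eq_supported]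
  congr 1
  ext x
  constructor
  · intro hx
    obtain ⟨i, hi, ⟨-, hval⟩ | ⟨hm, -⟩⟩ := hc.exists_eq_pair_of_rotEquiv x.prop hx
    · exact ⟨i, hi, Subtype.ext hval.symm⟩
    · omega
  · rintro ⟨i, -, rfl⟩
    simpa [fullPairBasis, concatP_fullPair] using hc.rotEquiv_rotI i

lemma Wsp_eq_supported_lastArrowPairBasis :
    Wsp k Q R c L = supported k k (lastArrowPairBasis hc hL '' Set.Iio (periodP Q c)) := by
  rw [Wsp_eq_supported]
  congr 1
  ext x
  constructor
  · intro hx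
    obtain ⟨i, hi, ⟨hm, -⟩ | ⟨-, hval⟩⟩ := hc.exists_eq_pair_of_rotEquiv x.prop hx
    · omega
    · exact ⟨i, hi, Subtype.ext hval.symm⟩
  · rintro ⟨i, -, rfl⟩
    simpa [lastArrowPairBasis, (hc.rot_iter i).concatP_lastArrowPair] using hc.rotEquiv_rotI i

include hc hL in
lemma Wsp_eq_bot {m : ℕ} (hm₁ : m ≠ L + 1) (hm₂ : m ≠ L) : Wsp k Q R c m = ⊥ := by
  rw [Wsp_eq_supported, ← supported_empty]
  congr 1
  refine Set.eq_empty_iff_forall_notMem.mpr fun x hx => ?_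
  obtain ⟨i, -, ⟨hm, -⟩ | ⟨hm, -⟩⟩ := hc.exists_eq_pair_of_rotEquiv x.prop hx <;> omega

lemma hCycM_eq :
    hCycM k Q R (L + 1) c =
      twistedSum (fullPairBasis hc hL) (periodP Q c) ((-1 : k) ^ (L + 2)) :=
  Finset.sum_congr rfl fun i _ => by
    rw [pow_mul, ← smul_single_one, ← bw_fullPair_rotI k hc hL]
    rfl

lemma hCycM_rotP_eq :
    hCycM k Q R (L + 1) (rotP Q c) =
      ∑ i ∈ Finset.range (periodP Q c),
        single (fullPairBasis hc hL (i + 1)) (((-1 : k) ^ (L + 2)) ^ i) := by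
  rw [hCycM, hc.periodP_rotP]
  refine Finset.sum_congr rfl fun i _ => ?_
  rw [pow_mul, ← smul_single_one, ← bw_fullPair_rotI k hc hL, rotI_succ]
  rfl

lemma single_lastArrowPairBasis_zero_mem_ZSp :
    single (lastArrowPairBasis hc hL 0) 1 ∈ ZSp k Q R L := by
  cases L with
  | zero => exact Submodule.mem_top
  | succ M => exact LinearMap.mem_ker.mpr (hc.bd_single_lastArrowPair k hL _ rfl)

end Circuit

section Homology

open Finsupp

variable (k : Type) [Field k] {Q : Quiv} {R : Set (Q.A × Q.A)} {c : PathDat Q} {L : ℕ}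
  (hc : CompleteCycle Q R c) (hL : c.2.length = L + 1)
include hc hL

lemma WB_eq_map_supported :
    WB k Q R c L =
      (supported k k (fullPairBasis hc hL '' Set.Iio (periodP Q c))).map (bd k Q R L) := by
  rw [WB, Wsp_succ_eq_supported_fullPairBasis]

lemma WB_succ_eq_bot : WB k Q R c (L + 1) = ⊥ := by
  rw [WB, Wsp_eq_bot k hc hL (by omega) (by omega), Submodule.map_bot]

lemma subHomSpannedBy_hCycM (hε : ((-1 : k) ^ (L + 2)) ^ periodP Q c = 1) :
    SubHomSpannedBy k Q R c (L + 1) (hCycM k Q R (L + 1) c) := by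
  have hT := isTwistedCycle_bd k hc hL
  rw [SubHomSpannedBy, WZ, WB_succ_eq_bot k hc hL, Wsp_succ_eq_supported_fullPairBasis k hc hL,
    hCycM_eq k hc hL]
  refine ⟨⟨hT.d_twistedSum hε, twistedSum_mem_supported _ _ _⟩,
    (Submodule.mem_bot k).not.mpr hT.twistedSum_ne_zero,
    fun z hz => ⟨z (fullPairBasis hc hL 0), ?_⟩⟩
  rw [Submodule.mem_bot, sub_eq_zero]
  exact hT.eq_smul_twistedSum_of_d_eq_zero hz.2 hz.1

lemma subHomSpannedBy_lastArrowPair (hε : ((-1 : k) ^ (L + 2)) ^ periodP Q c = 1) :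
    SubHomSpannedBy k Q R c L (bw k Q R L (l1P Q c, l2P Q c)) := by
  have hT := isTwistedCycle_bd k hc hL
  rw [SubHomSpannedBy, WZ, WB_eq_map_supported k hc hL, Wsp_eq_supported_lastArrowPairBasis k hc hL,
    show (l1P Q c, l2P Q c) = lastArrowPair (rotI Q 0 c) from rfl, bw_lastArrowPair_rotI k hc hL]
  exact ⟨⟨single_lastArrowPairBasis_zero_mem_ZSp k hc hL,
      single_mem_supported k 1 ⟨0, hc.periodP_pos, rfl⟩⟩,
    hT.single_x_zero_not_mem_map hε, fun z hz => hT.exists_sub_smul_mem_map hz.2⟩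

lemma hCycM_rotP (hε : ((-1 : k) ^ (L + 2)) ^ periodP Q c = 1) :
    hCycM k Q R (L + 1) (rotP Q c) = ((-1 : k) ^ (L + 2)) • hCycM k Q R (L + 1) c := by
  rw [hCycM_rotP_eq k hc hL, hCycM_eq k hc hL,
    (isTwistedCycle_bd k hc hL).sum_single_succ_eq_smul_twistedSum hε]

lemma bw_lastArrowPair_rotP_sub_mem_WB :
    bw k Q R L (l1P Q (rotP Q c), l2P Q (rotP Q c)) -
      ((-1 : k) ^ (L + 2)) • bw k Q R L (l1P Q c, l2P Q c) ∈ WB k Q R c L := by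
  rw [show (l1P Q c, l2P Q c) = lastArrowPair (rotI Q 0 c) from rfl,
    show (l1P Q (rotP Q c), l2P Q (rotP Q c)) = lastArrowPair (rotI Q 1 c) from rfl,
    bw_lastArrowPair_rotI k hc hL, bw_lastArrowPair_rotI k hc hL, WB_eq_map_supported k hc hL,
    ← pow_one ((-1 : k) ^ (L + 2))]
  exact (isTwistedCycle_bd k hc hL).single_x_sub_mem_map 1

lemma WZ_le_WB_of_ne {m : ℕ} (hm₁ : m ≠ L + 1) (hm₂ : m ≠ L) :
    WZ k Q R c m ≤ WB k Q R c m := by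
  rw [WZ, Wsp_eq_bot k hc hL hm₁ hm₂, inf_bot_eq]
  exact bot_le

lemma WZ_le_WB_of_pow_ne_one (hε : ((-1 : k) ^ (L + 2)) ^ periodP Q c ≠ 1) (m : ℕ) :
    WZ k Q R c m ≤ WB k Q R c m := by
  have hT := isTwistedCycle_bd k hc hL
  by_cases hm₁ : m = L + 1
  · subst hm₁
    intro z hz
    rw [WZ, Wsp_succ_eq_supported_fullPairBasis k hc hL] at hz
    rw [hT.eq_zero_of_d_eq_zero hε hz.2 hz.1]
    exact zero_mem _
  by_cases hm₂ : m = L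
  · subst hm₂
    rw [WZ, Wsp_eq_supported_lastArrowPairBasis k hc hL, WB_eq_map_supported k hc hL]
    exact inf_le_right.trans (hT.supported_x_le_map hε)
  exact WZ_le_WB_of_ne k hc hL hm₁ hm₂

end Homology

theorem homology_of_complete_circuit_general (k : Type) [Field k] (Q : Quiv)
    (R : Set (Q.A × Q.A)) (c : PathDat Q) (L r : ℕ)
    (hc : Complete Q R c) (hL : plen Q c = L + 1) (hr : periodP Q c = r) :
    (((-1 : k) ^ ((L + 2) * r) = 1 →
      (∀ m : ℕ, m ≠ L + 1 → m ≠ L → WZ k Q R c m ≤ WB k Q R c m) ∧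
      SubHomSpannedBy k Q R c (L + 1) (hCycM k Q R (L + 1) c) ∧
      SubHomSpannedBy k Q R c L (bw k Q R L (l1P Q c, l2P Q c)) ∧
      hCycM k Q R (L + 1) (rotP Q c) = ((-1 : k) ^ (L + 2)) • hCycM k Q R (L + 1) c ∧
      (bw k Q R L (l1P Q (rotP Q c), l2P Q (rotP Q c)) -
          ((-1 : k) ^ (L + 2)) • bw k Q R L (l1P Q c, l2P Q c)) ∈ WB k Q R c L)) ∧
    ((-1 : k) ^ ((L + 2) * r) ≠ 1 → ∀ m : ℕ, WZ k Q R c m ≤ WB k Q R c m) := by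
  subst hr
  have hcc := hc.completeCycle
  rw [pow_mul]
  exact ⟨fun hε => ⟨fun _ => WZ_le_WB_of_ne k hcc hL, subHomSpannedBy_hCycM k hcc hL hε,
      subHomSpannedBy_lastArrowPair k hcc hL hε, hCycM_rotP k hcc hL hε,
      bw_lastArrowPair_rotP_sub_mem_WB k hcc hL⟩,
    WZ_le_WB_of_pow_ne_one k hcc hL⟩

/-- Let `(Q, R)` be a quadratic monomial presentation and `C`
the complete circuit of a complete cycle `c` of length `l = L + 1` and period
`r`. (1) If `(-1)^{(l+1)r} = 1` in `k`, then `H_m(k(B ⊙ Γ)_C) = 0` for all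
`m ∉ {l, l-1}`, while `H_l` and `H_{l-1}` are one-dimensional, spanned by the
classes of `ĥ(c) = Σ_{i=0}^{r-1} (-1)^{(l+1)i} (s(rot^i c), rot^i c)` and of
`(l1(c), l2(c))` respectively; these generators depend on the representative:
`ĥ(rot c) = (-1)^{l+1} ĥ(c)`, and `(l1(rot c), l2(rot c))` is homologous to
`(-1)^{l+1} (l1(c), l2(c))`. (2) If `(-1)^{(l+1)r} ≠ 1` in `k` then
`H_m(k(B ⊙ Γ)_C) = 0` for all `m`. -/
theorem homology_of_complete_circuit (k : Type) [Field k] (Q : Quiv)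
    (R : Set (Q.A × Q.A)) (hq : IsQuadMon Q R) (c : PathDat Q) (L r : ℕ)
    (hc : Complete Q R c) (hL : plen Q c = L + 1) (hr : periodP Q c = r) :
    (((-1 : k) ^ ((L + 2) * r) = 1 →
      (∀ m : ℕ, m ≠ L + 1 → m ≠ L → WZ k Q R c m ≤ WB k Q R c m) ∧
      SubHomSpannedBy k Q R c (L + 1) (hCycM k Q R (L + 1) c) ∧
      SubHomSpannedBy k Q R c L (bw k Q R L (l1P Q c, l2P Q c)) ∧
      hCycM k Q R (L + 1) (rotP Q c) = ((-1 : k) ^ (L + 2)) • hCycM k Q R (L + 1) c ∧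
      (bw k Q R L (l1P Q (rotP Q c), l2P Q (rotP Q c)) -
          ((-1 : k) ^ (L + 2)) • bw k Q R L (l1P Q c, l2P Q c)) ∈ WB k Q R c L)) ∧
    ((-1 : k) ^ ((L + 2) * r) ≠ 1 → ∀ m : ℕ, WZ k Q R c m ≤ WB k Q R c m) :=
  homology_of_complete_circuit_general k Q R c L r hc hL hr

end GentleTT
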